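/- Under the point-line duality sending a point (a,b) to the line {a x + b y = 1}, the dual curve of the Kepler orbit {a₀ x + b₀ y + c₀√(x²+y²) = 1} (c₀ > 0, the set of (a,b) such that the line a x + b y = 1 is tangent to the orbit) is contained in the circle of radius c₀ centered at (a₀, b₀) in the ab-plane. -/

import Mathlib

/-!
The function `f v = ⟪w₀, v⟫ + c ‖v‖` is positively homogeneous of degree one, so Euler's identity
`⟪∇f v, v⟫ = f v` holds. At a point `v` of the orbit `f v = 1`, a normal `w = t • ∇f v` of a
tangent line `⟪w, v⟫ = 1` therefore has `t = 1`, and then `w - w₀ = (c / ‖v‖) • v` has norm `|c|`.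
-/

open RealInnerProductSpace

section KeplerGradient

variable {E : Type*} [NormedAddCommGroup E] [InnerProductSpace ℝ E]

/-- The gradient of `v ↦ ⟪w₀, v⟫ + c * ‖v‖` for `v ≠ 0`. -/
noncomputable def keplerGradient (w₀ : E) (c : ℝ) (v : E) : E := w₀ + (c / ‖v‖) • v

theorem inner_keplerGradient_self (w₀ : E) (c : ℝ) (v : E) :
    ⟪keplerGradient w₀ c v, v⟫ = ⟪w₀, v⟫ + c * ‖v‖ := by
  rcases eq_or_ne v 0 with rfl | hv
  · simp
  · have : ‖v‖ ≠ 0 := norm_ne_zero_iff.mpr hv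
    rw [keplerGradient, inner_add_left, real_inner_smul_left, real_inner_self_eq_norm_sq]
    field_simp

theorem norm_keplerGradient_sub (w₀ : E) (c : ℝ) {v : E} (hv : v ≠ 0) :
    ‖keplerGradient w₀ c v - w₀‖ = |c| := by
  rw [keplerGradient, add_sub_cancel_left, norm_smul, Real.norm_eq_abs, abs_div, abs_norm,
    div_mul_cancel₀ _ (norm_ne_zero_iff.mpr hv)]

variable {w₀ w v : E} {c t : ℝ}

theorem eq_keplerGradient_of_tangent (hon : ⟪w₀, v⟫ + c * ‖v‖ = 1) (hline : ⟪w, v⟫ = 1)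
    (htang : w = t • keplerGradient w₀ c v) : w = keplerGradient w₀ c v := by
  have ht : t = 1 := by
    rwa [htang, real_inner_smul_left, inner_keplerGradient_self, hon, mul_one] at hline
  rw [htang, ht, one_smul]

theorem norm_sub_eq_abs_of_tangent (hon : ⟪w₀, v⟫ + c * ‖v‖ = 1) (hline : ⟪w, v⟫ = 1)
    (htang : w = t • keplerGradient w₀ c v) : ‖w - w₀‖ = |c| := by
  have hv : v ≠ 0 := by
    rintro rfl
    exact zero_ne_one ((inner_zero_right (𝕜 := ℝ) w).symm.trans hline)
  rw [eq_keplerGradient_of_tangent hon hline htang, norm_keplerGradient_sub w₀ c hv]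

end KeplerGradient

theorem EuclideanSpace.norm_vec_two (x y : ℝ) : ‖!₂[x, y]‖ = Real.sqrt (x ^ 2 + y ^ 2) := by
  simp [EuclideanSpace.norm_eq, Fin.sum_univ_two]

theorem EuclideanSpace.inner_vec_two (a b x y : ℝ) : ⟪!₂[a, b], !₂[x, y]⟫ = a * x + b * y := by
  simp only [PiLp.inner_apply, Fin.sum_univ_two]
  simp [mul_comm]

theorem dual_of_kepler_orbit_is_circle
    (a₀ b₀ c₀ a b : ℝ) (p : ℝ × ℝ)
    (hon : a₀ * p.1 + b₀ * p.2 + c₀ * Real.sqrt (p.1 ^ 2 + p.2 ^ 2) = 1)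
    (hline : a * p.1 + b * p.2 = 1)
    (htang : ∃ t : ℝ,
        a = t * (a₀ + c₀ * p.1 / Real.sqrt (p.1 ^ 2 + p.2 ^ 2)) ∧
        b = t * (b₀ + c₀ * p.2 / Real.sqrt (p.1 ^ 2 + p.2 ^ 2))) :
    (a - a₀) ^ 2 + (b - b₀) ^ 2 = c₀ ^ 2 := by
  obtain ⟨t, ha, hb⟩ := htang
  have hnorm := EuclideanSpace.norm_vec_two p.1 p.2
  have hdist := norm_sub_eq_abs_of_tangent (w₀ := !₂[a₀, b₀]) (w := !₂[a, b]) (t := t)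
    (by rw [EuclideanSpace.inner_vec_two, hnorm, hon])
    (by rw [EuclideanSpace.inner_vec_two, hline])
    (by ext i; fin_cases i <;> simp [keplerGradient, hnorm, ha, hb] <;> ring)
  have hsub : !₂[a, b] - !₂[a₀, b₀] = !₂[a - a₀, b - b₀] := by
    ext i; fin_cases i <;> simp
  rw [hsub, EuclideanSpace.norm_vec_two] at hdist
  rw [← sq_abs c₀, ← hdist, Real.sq_sqrt (by positivity)]
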